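/- Let f : Γ → ℝ be symmetric and C¹ on a symmetric open set Γ ⊂ ℝⁿ, and define F on symmetric matrices with eigenvalue vector in Γ by F(B) = f(eigenvalues of B). If B is diagonal with distinct diagonal entries λ₁,…,λₙ, then the derivative matrix F^{ij} = ∂F/∂B_{ij} is diagonal with F^{ii} = fᵢ(λ). -/

import Mathlib

/-!
Along the diagonal direction `Eᵢᵢ` the matrix stays diagonal, so `F(diag λ + t Eᵢᵢ) = f(λ + t eᵢ)`
and the derivative is `fᵢ(λ)`. Along the symmetric off-diagonal direction `Eᵢⱼ + Eⱼᵢ` a Jacobi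
rotation in the `(i, j)`-plane, by the angle `θ(t) = -½ arctan(2t / (λᵢ - λⱼ))`, diagonalizes
`diag λ + t (Eᵢⱼ + Eⱼᵢ)`; the resulting eigenvalues are `λ + p(t) (eⱼ - eᵢ)` with `p(0) = p'(0) = 0`,
so by orthogonal invariance `F` is `f` composed with a curve of zero velocity at `λ`.
-/

open Matrix Real

section PlaneRotation

variable {ι R : Type*} [DecidableEq ι] [CommRing R]

theorem diagonal_mul_single_one [Fintype ι] (d : ι → R) (i j : ι) :
    diagonal d * single i j (1 : R) = d i • single i j 1 := by
  ext a b
  simp only [diagonal_mul, single_apply, Matrix.smul_apply, smul_eq_mul, mul_ite, mul_one,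
    mul_zero]
  split_ifs <;> simp_all

theorem single_one_mul_diagonal [Fintype ι] (d : ι → R) (i j : ι) :
    single i j (1 : R) * diagonal d = d j • single i j 1 := by
  ext a b
  simp only [mul_diagonal, single_apply, Matrix.smul_apply, smul_eq_mul, mul_ite, ite_mul,
    one_mul, zero_mul]
  split_ifs <;> simp_all

def planeRotation (i j : ι) (c s : R) : Matrix ι ι R :=
  1 + (c - 1) • (single i i 1 + single j j 1) + s • (single i j 1 - single j i 1)

theorem planeRotation_transpose (i j : ι) (c s : R) :
    (planeRotation i j c s)ᵀ = planeRotation i j c (-s) := by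
  simp only [planeRotation, transpose_add, transpose_smul, transpose_sub, transpose_one,
    transpose_single, neg_smul, smul_sub]
  abel

variable [Fintype ι]

theorem planeRotation_transpose_mul_self {i j : ι} (hij : i ≠ j) {c s : R}
    (hcs : c ^ 2 + s ^ 2 = 1) :
    (planeRotation i j c s)ᵀ * planeRotation i j c s = 1 := by
  rw [planeRotation_transpose]
  simp only [planeRotation, mul_add, add_mul, mul_sub, sub_mul, Matrix.smul_mul, Matrix.mul_smul,
    Matrix.one_mul, single_mul_single_same, single_mul_single_of_ne, ne_eq, hij, hij.symm,
    not_false_iff, smul_zero, smul_smul, smul_add, smul_sub, mul_one]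
  match_scalars <;> grind

theorem planeRotation_transpose_mul_diagonal_add_mul {i j : ι} (hij : i ≠ j) (d : ι → R)
    {c s t : R} (hcs : c ^ 2 + s ^ 2 = 1)
    (hoff : c * s * (d i - d j) + t * (c ^ 2 - s ^ 2) = 0) :
    (planeRotation i j c s)ᵀ * (diagonal d + t • (single i j 1 + single j i 1)) *
        planeRotation i j c s
      = diagonal d + (s ^ 2 * (d i - d j) + 2 * c * s * t) • (single j j 1 - single i i 1) := by
  rw [planeRotation_transpose]
  simp only [planeRotation, mul_add, add_mul, mul_sub, sub_mul, Matrix.smul_mul, Matrix.mul_smul,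
    Matrix.one_mul, single_mul_single_same, single_mul_single_of_ne, ne_eq, hij, hij.symm,
    not_false_iff, smul_zero, smul_smul, smul_add, smul_sub, mul_one, zero_mul, add_zero, zero_add,
    diagonal_mul_single_one, single_one_mul_diagonal]
  match_scalars <;> grind

end PlaneRotation

section JacobiRotation

noncomputable def jacobiAngle (a b t : ℝ) : ℝ := -arctan (2 * t / (a - b)) / 2

noncomputable def jacobiShift (a b t : ℝ) : ℝ :=
  sin (jacobiAngle a b t) ^ 2 * (a - b) + 2 * cos (jacobiAngle a b t) * sin (jacobiAngle a b t) * t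

theorem jacobiAngle_spec {a b : ℝ} (hab : a ≠ b) (t : ℝ) :
    cos (jacobiAngle a b t) * sin (jacobiAngle a b t) * (a - b)
      + t * (cos (jacobiAngle a b t) ^ 2 - sin (jacobiAngle a b t) ^ 2) = 0 := by
  have hx : 2 * t / (a - b) * (a - b) = 2 * t := div_mul_cancel₀ _ (sub_ne_zero.mpr hab)
  have hcs : cos (jacobiAngle a b t) * sin (jacobiAngle a b t)
      = sin (2 * jacobiAngle a b t) / 2 := by rw [sin_two_mul]; ring
  have hθ : 2 * jacobiAngle a b t = -arctan (2 * t / (a - b)) := by unfold jacobiAngle; ring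
  rw [← cos_two_mul', hcs, hθ, sin_neg, cos_neg, sin_arctan, cos_arctan]
  generalize 2 * t / (a - b) = x at hx ⊢
  field_simp
  linear_combination -hx

theorem hasDerivAt_jacobiAngle (a b : ℝ) : HasDerivAt (jacobiAngle a b) (-(1 / (a - b))) 0 := by
  have h := (((hasDerivAt_id (0 : ℝ)).const_mul 2).div_const (a - b)).arctan.neg.div_const 2
  exact h.congr_deriv (by simp; ring)

theorem hasDerivAt_jacobiShift (a b : ℝ) : HasDerivAt (jacobiShift a b) 0 0 := by
  have hθ0 : jacobiAngle a b 0 = 0 := by simp [jacobiAngle]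
  have hθ := hasDerivAt_jacobiAngle a b
  have h := ((hθ.sin.pow 2).mul_const (a - b)).add
    (((hθ.cos.const_mul 2).mul hθ.sin).mul (hasDerivAt_id 0))
  exact h.congr_deriv (by simp [hθ0])

theorem exists_orthogonal_conj_diagonal_add_offDiag {ι : Type*} [Fintype ι] [DecidableEq ι]
    {i j : ι} (hij : i ≠ j) {d : ι → ℝ} (hd : d i ≠ d j) (t : ℝ) :
    ∃ Q : Matrix ι ι ℝ, Qᵀ * Q = 1 ∧
      Qᵀ * (diagonal d + t • (single i j 1 + single j i 1)) * Q
        = diagonal (d + jacobiShift (d i) (d j) t • (Pi.single j 1 - Pi.single i 1)) := by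
  set θ := jacobiAngle (d i) (d j) t
  refine ⟨planeRotation i j (cos θ) (sin θ),
    planeRotation_transpose_mul_self hij (cos_sq_add_sin_sq θ), ?_⟩
  rw [planeRotation_transpose_mul_diagonal_add_mul hij d (cos_sq_add_sin_sq θ)
    (jacobiAngle_spec hd t), ← diagonal_single, ← diagonal_single, diagonal_sub, ← diagonal_smul,
    diagonal_add]
  rfl

end JacobiRotation

theorem hasDerivAt_of_orthogonal_conj_eq_diagonal {ι : Type*} [Fintype ι] [DecidableEq ι]
    {Γ : Set (ι → ℝ)} (hΓ : IsOpen Γ) {f : (ι → ℝ) → ℝ} {F : Matrix ι ι ℝ → ℝ}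
    (hFf : ∀ d ∈ Γ, F (diagonal d) = f d)
    (hFinv : ∀ B Q : Matrix ι ι ℝ, Qᵀ * Q = 1 → F (Qᵀ * B * Q) = F B)
    {lam : ι → ℝ} (hlam : lam ∈ Γ) {φ : (ι → ℝ) →L[ℝ] ℝ} (hf : HasFDerivAt f φ lam)
    {M : ℝ → Matrix ι ι ℝ} {μ : ℝ → ι → ℝ} {μ' : ι → ℝ} {t₀ : ℝ}
    (hμ : HasDerivAt μ μ' t₀) (hμ₀ : μ t₀ = lam)
    (hM : ∀ t, ∃ Q : Matrix ι ι ℝ, Qᵀ * Q = 1 ∧ Qᵀ * M t * Q = diagonal (μ t)) :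
    HasDerivAt (fun t => F (M t)) (φ μ') t₀ := by
  have hfμ : HasDerivAt (fun t => f (μ t)) (φ μ') t₀ := (hμ₀ ▸ hf).comp_hasDerivAt t₀ hμ
  have hμΓ : ∀ᶠ t in nhds t₀, μ t ∈ Γ :=
    hμ.continuousAt.preimage_mem_nhds (hμ₀ ▸ hΓ.mem_nhds hlam)
  refine hfμ.congr_of_eventuallyEq ?_
  filter_upwards [hμΓ] with t ht
  obtain ⟨Q, hQ, hQM⟩ := hM t
  rw [← hFinv (M t) Q hQ, hQM, hFf _ ht]

theorem stmt17_general {n : ℕ} (Γ : Set (Fin n → ℝ)) (hopen : IsOpen Γ)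
    (f : (Fin n → ℝ) → ℝ)
    (F : Matrix (Fin n) (Fin n) ℝ → ℝ)
    (hFf : ∀ d : Fin n → ℝ, d ∈ Γ → F (Matrix.diagonal d) = f d)
    (hFinv : ∀ B Q : Matrix (Fin n) (Fin n) ℝ, Q.transpose * Q = 1 → F (Q.transpose * B * Q) = F B)
    (lam : Fin n → ℝ) (hlam : lam ∈ Γ)
    (hdist : ∀ i j, i ≠ j → lam i ≠ lam j)
    (φ : (Fin n → ℝ) →L[ℝ] ℝ) (hf' : HasFDerivAt f φ lam) :
    (∀ i : Fin n, HasDerivAt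
        (fun t : ℝ => F (Matrix.diagonal lam + t • Matrix.single i i 1))
        (φ (Pi.single i 1)) 0) ∧
    (∀ i j : Fin n, i ≠ j → HasDerivAt
        (fun t : ℝ => F (Matrix.diagonal lam +
          t • (Matrix.single i j 1 + Matrix.single j i 1)))
        0 0) := by
  refine ⟨fun i => ?_, fun i j hij => ?_⟩
  · have hμ : HasDerivAt (fun t : ℝ => lam + t • Pi.single i 1) (Pi.single i 1) 0 :=
      ((hasDerivAt_id 0).smul_const _).const_add lam |>.congr_deriv (one_smul _ _)
    refine hasDerivAt_of_orthogonal_conj_eq_diagonal hopen hFf hFinv hlam hf' hμ (by simp)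
      fun t => ⟨1, by simp, ?_⟩
    rw [transpose_one, Matrix.one_mul, Matrix.mul_one, ← diagonal_single, ← diagonal_smul,
      diagonal_add]
    rfl
  · have hμ := (hasDerivAt_jacobiShift (lam i) (lam j)).smul_const
      (Pi.single j (1 : ℝ) - Pi.single i 1) |>.const_add lam
    simpa using hasDerivAt_of_orthogonal_conj_eq_diagonal hopen hFf hFinv hlam hf' hμ
      (by simp [jacobiShift, jacobiAngle])
      (exists_orthogonal_conj_diagonal_add_offDiag hij (hdist i j hij))

/-- For `F(B) = f(eigenvalues of B)` (encoded by orthogonal invariance of `F` and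
`F(diag d) = f(d)`), at a diagonal matrix with distinct entries the derivative matrix
`F^{ij}` is diagonal with diagonal entries `fᵢ(λ)`: the directional derivative of `F`
in the direction `Eᵢᵢ` is `fᵢ(λ)` and in each symmetric off-diagonal direction is `0`. -/
theorem stmt17 {n : ℕ} (Γ : Set (Fin n → ℝ)) (hopen : IsOpen Γ)
    (hΓsym : ∀ σ : Equiv.Perm (Fin n), ∀ x ∈ Γ, (fun i => x (σ i)) ∈ Γ)
    (f : (Fin n → ℝ) → ℝ)
    (hfsym : ∀ σ : Equiv.Perm (Fin n), ∀ x ∈ Γ, f (fun i => x (σ i)) = f x)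
    (hfC1 : ∀ x ∈ Γ, DifferentiableAt ℝ f x)
    (F : Matrix (Fin n) (Fin n) ℝ → ℝ)
    (hFf : ∀ d : Fin n → ℝ, d ∈ Γ → F (Matrix.diagonal d) = f d)
    (hFinv : ∀ B Q : Matrix (Fin n) (Fin n) ℝ, Q.transpose * Q = 1 → F (Q.transpose * B * Q) = F B)
    (lam : Fin n → ℝ) (hlam : lam ∈ Γ)
    (hdist : ∀ i j, i ≠ j → lam i ≠ lam j)
    (φ : (Fin n → ℝ) →L[ℝ] ℝ) (hf' : HasFDerivAt f φ lam) :
    (∀ i : Fin n, HasDerivAt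
        (fun t : ℝ => F (Matrix.diagonal lam + t • Matrix.single i i 1))
        (φ (Pi.single i 1)) 0) ∧
    (∀ i j : Fin n, i ≠ j → HasDerivAt
        (fun t : ℝ => F (Matrix.diagonal lam +
          t • (Matrix.single i j 1 + Matrix.single j i 1)))
        0 0) :=
  stmt17_general Γ hopen f F hFf hFinv lam hlam hdist φ hf'
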